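/- For qualities 0 ≤ q < q' ≤ 1 and any monotone partiality strategy σ, there exists a coupling f of the t-deep history distribution at quality q (first marginal) and at quality q' (second marginal) such that f is supported on pairs (Z, Z') satisfying: for every k ≤ t there exists l ≤ k with dig(Z'^l) ≽ dig(Z^k); in particular con(Z'^k) ≥ con(Z^k) for all k ≤ t. -/

import Mathlib

/-- Round outcomes: success, no consumption, failure. -/
inductive Ev : Type
  | S : Ev
  | N : Ev
  | F : Ev
deriving DecidableEq

instance : Fintype Ev where
  elems := {Ev.S, Ev.N, Ev.F}
  complete := fun x => by cases x <;> simp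

/-- A history is a finite sequence of round outcomes. -/
abbrev Hist := List Ev

/-- The digest of a history: the subsequence of non-`N` entries. -/
def dig (Z : Hist) : Hist := Z.filter (fun v => v ≠ Ev.N)

/-- Consumption: the number of non-`N` entries. -/
def con (Z : Hist) : ℕ := (dig Z).length

/-- Number of successes. -/
def Scount (Z : Hist) : ℕ := (Z.filter (fun v => v = Ev.S)).length

/-- Number of failures. -/
def Fcount (Z : Hist) : ℕ := (Z.filter (fun v => v = Ev.F)).length

/-- `Superior Z1 Z2` : equal depth, equal consumption, and no digest index
where `Z1` has `F` while `Z2` has `S`. -/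
def Superior (Z1 Z2 : Hist) : Prop :=
  Z1.length = Z2.length ∧ con Z1 = con Z2 ∧
    ∀ i : ℕ, ¬ ((dig Z1)[i]? = some Ev.F ∧ (dig Z2)[i]? = some Ev.S)

/-- Helper for the ex-ante function: current prefix, remaining events. -/
def exAnteFrom (σ : Hist → ℝ) : Hist → Hist → ℝ
  | _, [] => 1
  | pre, v :: rest =>
      (if v = Ev.N then 1 - σ pre else σ pre) * exAnteFrom σ (pre ++ [v]) rest

/-- The ex-ante function `c` of a partiality strategy `σ`:
`c(empty)=1`, `c(ZV)=σ(Z)c(Z)` for `V∈{S,F}`, `c(ZN)=(1-σ(Z))c(Z)`. -/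
def exAnte (σ : Hist → ℝ) (Z : Hist) : ℝ := exAnteFrom σ [] Z

/-- Probability of a full history under the Markov chain with quality `q`. -/
def histProb (σ : Hist → ℝ) (q : ℝ) (Z : Hist) : ℝ :=
  exAnte σ Z * q ^ Scount Z * (1 - q) ^ Fcount Z

/-- A strategy takes values in `[0,1]`. -/
def ValidStrat (σ : Hist → ℝ) : Prop := ∀ Z, σ Z ∈ Set.Icc (0 : ℝ) 1

/-- A monotone partiality strategy. -/
def MonotoneStrat (σ : Hist → ℝ) : Prop :=
  ∀ Z1 Z2, Superior Z1 Z2 → σ Z2 ≤ σ Z1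

/-- Digest superiority: equal consumption and no digest index with `F` in the
first history and `S` in the second. -/
def DigSuperior (W V : Hist) : Prop :=
  con W = con V ∧
    ∀ i : ℕ, ¬ ((dig W)[i]? = some Ev.F ∧ (dig V)[i]? = some Ev.S)

namespace CP

/-! ### Basic facts about digests and consumption -/

lemma dig_cons_N (r : Hist) : dig (Ev.N :: r) = dig r := by simp [dig]
lemma dig_cons_ne (a : Ev) (r : Hist) (ha : a ≠ Ev.N) : dig (a :: r) = a :: dig r := by
  simp [dig, ha]
lemma dig_append (xs ys : Hist) : dig (xs ++ ys) = dig xs ++ dig ys := by simp [dig]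
lemma con_append (xs ys : Hist) : con (xs ++ ys) = con xs + con ys := by
  simp [con, dig_append]
lemma con_append_N (p : Hist) : con (p ++ [Ev.N]) = con p := by simp [con, dig_append, dig]
lemma con_append_consume (p : Hist) (a : Ev) (ha : a ≠ Ev.N) :
    con (p ++ [a]) = con p + 1 := by simp [con, dig_append, dig, ha]
lemma con_cons_N (r : Hist) : con (Ev.N :: r) = con r := by simp [con, dig_cons_N]
lemma con_cons_ne (a : Ev) (r : Hist) (ha : a ≠ Ev.N) : con (a :: r) = con r + 1 := by
  simp [con, dig_cons_ne a r ha]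
lemma con_le_length (Z : Hist) : con Z ≤ Z.length := by
  simpa [con, dig] using List.length_filter_le _ Z
lemma dig_mem_ne_N {Z : Hist} {e : Ev} (h : e ∈ dig Z) : e ≠ Ev.N := by
  have := List.of_mem_filter h
  simpa using this

lemma dig_take_prefix (Z : Hist) (k : ℕ) : dig (Z.take k) <+: dig Z :=
  ⟨dig (Z.drop k), by rw [← dig_append, List.take_append_drop]⟩

lemma prefix_getElem? {L1 L2 : Hist} (h : L1 <+: L2) {i : ℕ} {e : Ev}
    (he : L1[i]? = some e) : L2[i]? = some e := by
  obtain ⟨s, rfl⟩ := h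
  rw [List.getElem?_append_left (List.getElem?_eq_some_iff.mp he).1]
  exact he

lemma con_take_succ (Z : Hist) (j : ℕ) :
    con (Z.take (j+1)) ≤ con (Z.take j) + 1 := by
  rw [List.take_succ, con_append]
  have : con (Z[j]?.toList) ≤ 1 := by
    cases h : Z[j]? with
    | none => simp [con, dig]
    | some e => cases e <;> simp [con, dig]
  omega

lemma exists_take_con (Z : Hist) (m k : ℕ) (h : m ≤ con (Z.take k)) :
    ∃ l ≤ k, con (Z.take l) = m := by
  induction k with
  | zero =>
    refine ⟨0, le_refl 0, ?_⟩
    simp [con, dig] at h ⊢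
    omega
  | succ k ih =>
    by_cases h2 : m ≤ con (Z.take k)
    · obtain ⟨l, hl, he⟩ := ih h2
      exact ⟨l, Nat.le_succ_of_le hl, he⟩
    · have := con_take_succ Z k
      refine ⟨k + 1, le_refl _, ?_⟩
      omega

/-! ### The coupling kernel -/

def sgn1 : Fin 3 → Ev := ![Ev.S, Ev.F, Ev.F]
def sgn2 : Fin 3 → Ev := ![Ev.S, Ev.S, Ev.F]
def w (q q' : ℝ) : Fin 3 → ℝ := ![q, q' - q, 1 - q']
def vext (t : ℕ) (v : Fin t → Fin 3) (i : ℕ) : Fin 3 := if h : i < t then v ⟨i, h⟩ else 0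

lemma vext_val {t : ℕ} (v : Fin t → Fin 3) (i : Fin t) : vext t v i.val = v i := by
  simp [vext]

lemma sgn1_ne_N (c : Fin 3) : sgn1 c ≠ Ev.N := by fin_cases c <;> simp [sgn1]
lemma sgn2_ne_N (c : Fin 3) : sgn2 c ≠ Ev.N := by fin_cases c <;> simp [sgn2]
lemma sgn1_S_imp {c : Fin 3} (h : sgn1 c = Ev.S) : sgn2 c = Ev.S := by
  fin_cases c <;> simp_all [sgn1, sgn2]

def g (σ : Hist → ℝ) (v : ℕ → Fin 3) (p1 p2 : Hist) (a a' : Ev) : ℝ :=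
  if a = Ev.N ∧ a' = Ev.N then 1 - max (σ p1) (σ p2)
  else if a = sgn1 (v (con p1)) ∧ a' = Ev.N then σ p1 - min (σ p1) (σ p2)
  else if a = Ev.N ∧ a' = sgn2 (v (con p2)) then σ p2 - min (σ p1) (σ p2)
  else if a = sgn1 (v (con p1)) ∧ a' = sgn2 (v (con p2)) then min (σ p1) (σ p2)
  else 0

def cpl (σ : Hist → ℝ) (v : ℕ → Fin 3) : Hist → Hist → Hist → Hist → ℝ
  | _, _, [], [] => 1
  | p1, p2, a :: r, a' :: r' => g σ v p1 p2 a a' * cpl σ v (p1 ++ [a]) (p2 ++ [a']) r r'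
  | _, _, _, _ => 0

def kk (σ : Hist → ℝ) (sg : Fin 3 → Ev) (v : ℕ → Fin 3) (p : Hist) (a : Ev) : ℝ :=
  if a = Ev.N then 1 - σ p else if a = sg (v (con p)) then σ p else 0

def PP (σ : Hist → ℝ) (sg : Fin 3 → Ev) (v : ℕ → Fin 3) : Hist → Hist → ℝ
  | _, [] => 1
  | p, a :: r => kk σ sg v p a * PP σ sg v (p ++ [a]) r

lemma sum_ev (h : Ev → ℝ) : ∑ a, h a = h .S + h .N + h .F := by
  rw [show (Finset.univ : Finset Ev) = {Ev.S, Ev.N, Ev.F} from rfl]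
  rw [Finset.sum_insert (by decide), Finset.sum_insert (by decide), Finset.sum_singleton]
  ring

lemma sum_g_right (σ : Hist → ℝ) (v : ℕ → Fin 3) (p1 p2 : Hist) (a : Ev) :
    ∑ a', g σ v p1 p2 a a' = kk σ sgn1 v p1 a := by
  rw [sum_ev]
  rcases le_total (σ p1) (σ p2) with h | h <;>
  · simp only [g, kk, max_eq_right h, min_eq_left h, max_eq_left h, min_eq_right h]
    generalize v (con p1) = c
    generalize v (con p2) = c'
    fin_cases c <;> fin_cases c' <;> cases a <;>
      simp [sgn1, sgn2] <;> ring

lemma sum_g_left (σ : Hist → ℝ) (v : ℕ → Fin 3) (p1 p2 : Hist) (a' : Ev) :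
    ∑ a, g σ v p1 p2 a a' = kk σ sgn2 v p2 a' := by
  rw [sum_ev]
  rcases le_total (σ p1) (σ p2) with h | h <;>
  · simp only [g, kk, max_eq_right h, min_eq_left h, max_eq_left h, min_eq_right h]
    generalize v (con p1) = c
    generalize v (con p2) = c'
    fin_cases c <;> fin_cases c' <;> cases a' <;>
      simp [sgn1, sgn2] <;> ring

lemma g_nonneg (σ : Hist → ℝ) (hval : ∀ Z, σ Z ∈ Set.Icc (0:ℝ) 1)
    (v : ℕ → Fin 3) (p1 p2 : Hist) (a a' : Ev) : 0 ≤ g σ v p1 p2 a a' := by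
  obtain ⟨h10, h11⟩ := hval p1
  obtain ⟨h20, h21⟩ := hval p2
  unfold g
  split
  · simp only [sub_nonneg]; exact max_le h11 h21
  split
  · simp only [sub_nonneg]; exact min_le_left _ _
  split
  · simp only [sub_nonneg]; exact min_le_right _ _
  split
  · exact le_min h10 h20
  · exact le_refl 0

lemma cpl_nonneg (σ : Hist → ℝ) (hval : ∀ Z, σ Z ∈ Set.Icc (0:ℝ) 1)
    (v : ℕ → Fin 3) : ∀ r r' p1 p2, 0 ≤ cpl σ v p1 p2 r r' := by
  intro r
  induction r with
  | nil => intro r' p1 p2; cases r' <;> simp [cpl]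
  | cons a rt ih =>
    intro r' p1 p2
    cases r' with
    | nil => simp [cpl]
    | cons a' rt' => exact mul_nonneg (g_nonneg σ hval v p1 p2 a a') (ih rt' _ _)

/-! ### Summing out one marginal of the coupling -/

lemma sum_pi_succ {n : ℕ} (F : (Fin (n+1) → Ev) → ℝ) :
    ∑ Z : Fin (n+1) → Ev, F Z = ∑ a : Ev, ∑ Ztl : Fin n → Ev, F (Fin.cons a Ztl) := by
  rw [← Equiv.sum_comp (Fin.consEquiv (fun _ => Ev)) F, Fintype.sum_prod_type]
  rfl

lemma ofFn_cons {n : ℕ} (a : Ev) (f : Fin n → Ev) :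
    List.ofFn (Fin.cons a f : Fin (n+1) → Ev) = a :: List.ofFn f := by
  rw [List.ofFn_succ]
  simp

lemma sum_cpl_right (σ : Hist → ℝ) (v : ℕ → Fin 3) :
    ∀ (n : ℕ) (r : Hist), r.length = n → ∀ p1 p2 : Hist,
      ∑ Z' : Fin n → Ev, cpl σ v p1 p2 r (List.ofFn Z') = PP σ sgn1 v p1 r := by
  intro n
  induction n with
  | zero =>
    intro r hr p1 p2
    rw [List.length_eq_zero_iff] at hr
    subst hr
    simp [cpl, PP]
  | succ n ih =>
    intro r hr p1 p2
    cases r with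
    | nil => simp at hr
    | cons a rt =>
      simp only [List.length_cons, Nat.succ.injEq] at hr
      rw [sum_pi_succ]
      have : ∀ a' : Ev, ∑ Ztl : Fin n → Ev,
          cpl σ v p1 p2 (a :: rt) (List.ofFn (Fin.cons a' Ztl)) =
          g σ v p1 p2 a a' * PP σ sgn1 v (p1 ++ [a]) rt := by
        intro a'
        rw [← ih rt hr (p1 ++ [a]) (p2 ++ [a']), Finset.mul_sum]
        refine Finset.sum_congr rfl fun Ztl _ => ?_
        rw [ofFn_cons]
        rfl
      rw [Finset.sum_congr rfl fun a' _ => this a']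
      rw [← Finset.sum_mul, sum_g_right]
      rfl

lemma sum_cpl_left (σ : Hist → ℝ) (v : ℕ → Fin 3) :
    ∀ (n : ℕ) (r' : Hist), r'.length = n → ∀ p1 p2 : Hist,
      ∑ Z : Fin n → Ev, cpl σ v p1 p2 (List.ofFn Z) r' = PP σ sgn2 v p2 r' := by
  intro n
  induction n with
  | zero =>
    intro r' hr p1 p2
    rw [List.length_eq_zero_iff] at hr
    subst hr
    simp [cpl, PP]
  | succ n ih =>
    intro r' hr p1 p2
    cases r' with
    | nil => simp at hr
    | cons a' rt' =>
      simp only [List.length_cons, Nat.succ.injEq] at hr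
      rw [sum_pi_succ]
      have : ∀ a : Ev, ∑ Ztl : Fin n → Ev,
          cpl σ v p1 p2 (List.ofFn (Fin.cons a Ztl)) (a' :: rt') =
          g σ v p1 p2 a a' * PP σ sgn2 v (p2 ++ [a']) rt' := by
        intro a
        rw [← ih rt' hr (p1 ++ [a]) (p2 ++ [a']), Finset.mul_sum]
        refine Finset.sum_congr rfl fun Ztl _ => ?_
        rw [ofFn_cons]
        rfl
      rw [Finset.sum_congr rfl fun a _ => this a]
      rw [← Finset.sum_mul, sum_g_left]
      rfl


section Generic
variable (σ : Hist → ℝ) (sg : Fin 3 → Ev)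

def ind (p Z : Hist) (i : ℕ) (c : Fin 3) : ℝ :=
  if con p ≤ i then
    match (dig Z)[i - con p]? with
    | some e => if e = sg c then 1 else 0
    | none => 1
  else 1

lemma PP_fact (t : ℕ) (v : ℕ → Fin 3) :
    ∀ (Z p : Hist), con p + con Z ≤ t →
      PP σ sg v p Z = exAnteFrom σ p Z * ∏ i : Fin t, ind sg p Z i.val (v i.val) := by
  intro Z
  induction Z with
  | nil =>
    intro p _
    simp [PP, exAnteFrom, ind, dig]
  | cons a r ih =>
    intro p hle
    by_cases ha : a = Ev.N
    · subst ha
      have h2 : con (Ev.N :: r) = con r := con_cons_N r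
      have hIH := ih (p ++ [Ev.N]) (by rw [con_append_N]; omega)
      have hprod : ∀ i : Fin t,
          ind sg p (Ev.N :: r) i.val (v i.val) = ind sg (p ++ [Ev.N]) r i.val (v i.val) := by
        intro i
        simp [ind, con_append_N, dig_cons_N]
      calc PP σ sg v p (Ev.N :: r)
          = (1 - σ p) * PP σ sg v (p ++ [Ev.N]) r := by simp [PP, kk]
        _ = (1 - σ p) * (exAnteFrom σ (p ++ [Ev.N]) r *
              ∏ i : Fin t, ind sg (p ++ [Ev.N]) r i.val (v i.val)) := by rw [hIH]
        _ = exAnteFrom σ p (Ev.N :: r) * ∏ i : Fin t, ind sg p (Ev.N :: r) i.val (v i.val) := by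
            rw [Finset.prod_congr rfl fun i _ => hprod i]
            simp [exAnteFrom]
            ring
    · have hcr : con (a :: r) = con r + 1 := con_cons_ne a r ha
      have hm : con p < t := by omega
      set m := con p with hmdef
      have hdig : dig (a :: r) = a :: dig r := dig_cons_ne a r ha
      have hcp : con (p ++ [a]) = m + 1 := con_append_consume p a ha
      have hk : kk σ sg v p a = (if a = sg (v m) then (1:ℝ) else 0) * σ p := by
        simp only [kk, if_neg ha, ← hmdef]
        by_cases h : a = sg (v m) <;> simp [h]
      have hIH := ih (p ++ [a]) (by omega)
      have e1 : ind sg p (a :: r) m (v m) = if a = sg (v m) then (1:ℝ) else 0 := by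
        simp [ind, hdig, ← hmdef]
      have e2 : ind sg (p ++ [a]) r m (v m) = 1 := by
        simp [ind, hcp]
      have key : ∀ i : Fin t, i.val ≠ m →
          ind sg p (a :: r) i.val (v i.val) = ind sg (p ++ [a]) r i.val (v i.val) := by
        intro i hi
        rcases lt_or_gt_of_ne hi with h | h
        · simp [ind, hcp, Nat.not_le.mpr h, Nat.not_le.mpr (Nat.lt_succ_of_lt h), ← hmdef]
        · have h1 : m ≤ i.val := le_of_lt h
          have h2 : m + 1 ≤ i.val := h
          have h3 : i.val - m = (i.val - (m + 1)) + 1 := by omega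
          simp [ind, hcp, h1, h2, hdig, h3, ← hmdef]
      have hsplit : ∏ i : Fin t, ind sg p (a :: r) i.val (v i.val)
          = (if a = sg (v m) then (1:ℝ) else 0) *
            ∏ i : Fin t, ind sg (p ++ [a]) r i.val (v i.val) := by
        rw [← Finset.mul_prod_erase Finset.univ
            (fun i : Fin t => ind sg p (a :: r) i.val (v i.val))
            (Finset.mem_univ (⟨m, hm⟩ : Fin t))]
        rw [← Finset.mul_prod_erase Finset.univ
            (fun i : Fin t => ind sg (p ++ [a]) r i.val (v i.val))
            (Finset.mem_univ (⟨m, hm⟩ : Fin t))]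
        have : ∀ i ∈ Finset.univ.erase (⟨m, hm⟩ : Fin t),
            ind sg p (a :: r) i.val (v i.val) = ind sg (p ++ [a]) r i.val (v i.val) := by
          intro i hi
          exact key i (fun h => (Finset.mem_erase.mp hi).1 (Fin.ext h))
        rw [Finset.prod_congr rfl this, e1, e2, one_mul]
      calc PP σ sg v p (a :: r)
          = kk σ sg v p a * PP σ sg v (p ++ [a]) r := by simp [PP]
        _ = ((if a = sg (v m) then (1:ℝ) else 0) * σ p) *
              (exAnteFrom σ (p ++ [a]) r * ∏ i : Fin t, ind sg (p ++ [a]) r i.val (v i.val)) := by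
            rw [hk, hIH]
        _ = exAnteFrom σ p (a :: r) * ∏ i : Fin t, ind sg p (a :: r) i.val (v i.val) := by
            rw [hsplit]
            simp [exAnteFrom, ha]
            ring

end Generic



section Generic2
variable (σ : Hist → ℝ) (sg : Fin 3 → Ev) (q q' : ℝ)

lemma sum_mu_PP (t : ℕ) (Z p : Hist) (hle : con p + con Z ≤ t) :
    ∑ v : Fin t → Fin 3, (∏ i, w q q' (v i)) * PP σ sg (vext t v) p Z
      = exAnteFrom σ p Z * ∏ i : Fin t, (∑ c : Fin 3, w q q' c * ind sg p Z i.val c) := by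
  have h1 : ∀ v : Fin t → Fin 3,
      (∏ i, w q q' (v i)) * PP σ sg (vext t v) p Z
        = exAnteFrom σ p Z * ∏ i : Fin t, (w q q' (v i) * ind sg p Z i.val (v i)) := by
    intro v
    rw [PP_fact σ sg t (vext t v) Z p hle]
    rw [Finset.prod_mul_distrib]
    have : ∀ i : Fin t, ind sg p Z i.val (vext t v i.val) = ind sg p Z i.val (v i) := by
      intro i; rw [vext_val]
    rw [Finset.prod_congr rfl fun i _ => this i]
    ring
  rw [Finset.sum_congr rfl fun v _ => h1 v, ← Finset.mul_sum]
  congr 1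
  rw [Fintype.prod_sum (fun (i : Fin t) (c : Fin 3) => w q q' c * ind sg p Z i.val c)]

lemma prod_theta (qS qF : ℝ) :
    ∀ D : Hist, (∀ e ∈ D, e ≠ Ev.N) →
      (∏ x ∈ Finset.range D.length,
        (match D[x]? with | some Ev.S => qS | some Ev.F => qF | _ => 1))
        = qS ^ Scount D * qF ^ Fcount D := by
  intro D
  induction D with
  | nil => simp [Scount, Fcount]
  | cons e D' ih =>
    intro hD
    have he : e ≠ Ev.N := hD e List.mem_cons_self
    have hD' : ∀ e' ∈ D', e' ≠ Ev.N := fun e' h => hD e' (List.mem_cons_of_mem e h)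
    rw [List.length_cons, Finset.prod_range_succ']
    have hshift : ∀ x, (e :: D')[x + 1]? = D'[x]? := by intro x; simp
    rw [Finset.prod_congr rfl fun x _ => by rw [hshift x]]
    rw [ih hD']
    cases e with
    | S => simp [Scount, Fcount]; ring
    | N => exact absurd rfl he
    | F => simp [Scount, Fcount]; ring

lemma Scount_dig (Z : Hist) : Scount (dig Z) = Scount Z := by
  induction Z with
  | nil => rfl
  | cons a r ih =>
    cases a <;> simp [Scount, dig, List.filter] at * <;> omega

lemma Fcount_dig (Z : Hist) : Fcount (dig Z) = Fcount Z := by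
  induction Z with
  | nil => rfl
  | cons a r ih =>
    cases a <;> simp [Fcount, dig, List.filter] at * <;> omega

lemma ind_none (p Z : Hist) (j : ℕ) (c : Fin 3) (h1 : con p ≤ j)
    (h2 : (dig Z)[j - con p]? = none) : ind sg p Z j c = 1 := by
  simp [ind, h1, h2]

lemma ind_low (p Z : Hist) (j : ℕ) (c : Fin 3) (h1 : j < con p) :
    ind sg p Z j c = 1 := by
  simp [ind, Nat.not_le.mpr h1]

lemma ind_some (p Z : Hist) (j : ℕ) (c : Fin 3) (e : Ev) (h1 : con p ≤ j)
    (h2 : (dig Z)[j - con p]? = some e) :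
    ind sg p Z j c = if e = sg c then 1 else 0 := by
  simp [ind, h1, h2]

lemma prod_TT (t : ℕ) (Z p : Hist) (hle : con p + con Z ≤ t)
    (qS qF : ℝ)
    (wsum : ∑ c : Fin 3, w q q' c = 1)
    (hypS : ∑ c : Fin 3, w q q' c * (if Ev.S = sg c then (1:ℝ) else 0) = qS)
    (hypF : ∑ c : Fin 3, w q q' c * (if Ev.F = sg c then (1:ℝ) else 0) = qF) :
    ∏ i : Fin t, (∑ c : Fin 3, w q q' c * ind sg p Z i.val c)
      = qS ^ Scount Z * qF ^ Fcount Z := by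
  show ∏ i : Fin t, (fun j => ∑ c : Fin 3, w q q' c * ind sg p Z j c) i.val
      = qS ^ Scount Z * qF ^ Fcount Z
  rw [Fin.prod_univ_eq_prod_range (fun j => ∑ c : Fin 3, w q q' c * ind sg p Z j c) t]
  obtain ⟨s, hs⟩ : ∃ s, t = (con p + con Z) + s := ⟨t - (con p + con Z), by omega⟩
  rw [hs, Finset.prod_range_add, Finset.prod_range_add]
  have tail1 : ∀ x, (∑ c : Fin 3, w q q' c * ind sg p Z (con p + con Z + x) c) = 1 := by
    intro x
    have hnone : (dig Z)[(con p + con Z + x) - con p]? = none := by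
      apply List.getElem?_eq_none
      show con Z ≤ _
      omega
    rw [Finset.sum_congr rfl fun c _ => by
      rw [ind_none sg p Z _ c (by omega) hnone, mul_one]]
    exact wsum
  have low1 : ∀ x, x < con p → (∑ c : Fin 3, w q q' c * ind sg p Z x c) = 1 := by
    intro x hx
    rw [Finset.sum_congr rfl fun c _ => by rw [ind_low sg p Z x c hx, mul_one]]
    exact wsum
  rw [Finset.prod_congr rfl fun x _ => tail1 x, Finset.prod_const_one, mul_one]
  rw [Finset.prod_congr rfl fun x hx => low1 x (Finset.mem_range.mp hx),
    Finset.prod_const_one, one_mul]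
  have mid : ∀ x, x < con Z →
      (∑ c : Fin 3, w q q' c * ind sg p Z (con p + x) c)
        = (match (dig Z)[x]? with | some Ev.S => qS | some Ev.F => qF | _ => 1) := by
    intro x hx
    have hx' : x < (dig Z).length := hx
    have hsome : (dig Z)[(con p + x) - con p]? = some ((dig Z)[x]) := by
      have : (con p + x) - con p = x := by omega
      rw [this]
      exact List.getElem?_eq_getElem hx'
    rw [Finset.sum_congr rfl fun c _ => by
      rw [ind_some sg p Z _ c _ (by omega) hsome]]
    have hmem : (dig Z)[x] ∈ dig Z := List.getElem_mem hx'
    have hne : (dig Z)[x] ≠ Ev.N := dig_mem_ne_N hmem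
    have hds : (dig Z)[x]? = some ((dig Z)[x]) := List.getElem?_eq_getElem hx'
    rw [hds]
    rcases h : (dig Z)[x] with _ | _ | _
    · rw [h] at *; exact hypS
    · exact absurd h hne
    · rw [h] at *; exact hypF
  rw [Finset.prod_congr rfl fun x hx => mid x (Finset.mem_range.mp hx)]
  have := prod_theta qS qF (dig Z) (fun e he => dig_mem_ne_N he)
  rw [show (dig Z).length = con Z from rfl] at this
  rw [this, Scount_dig, Fcount_dig]
end Generic2

/-! ### The support invariant -/

def GoodP (v : ℕ → Fin 3) (Z Z' : Hist) : Prop :=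
  Z.length = Z'.length ∧
  (∀ k, con (Z.take k) ≤ con (Z'.take k)) ∧
  (∀ i e, (dig Z)[i]? = some e → e = sgn1 (v i)) ∧
  (∀ i e, (dig Z')[i]? = some e → e = sgn2 (v i))

lemma g_cases {σ : Hist → ℝ} {v : ℕ → Fin 3} {p1 p2 : Hist} {a a' : Ev}
    (h : g σ v p1 p2 a a' ≠ 0) :
    (a = Ev.N ∧ a' = Ev.N) ∨
    (a = sgn1 (v (con p1)) ∧ a' = Ev.N ∧ σ p1 - min (σ p1) (σ p2) ≠ 0) ∨
    (a = Ev.N ∧ a' = sgn2 (v (con p2))) ∨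
    (a = sgn1 (v (con p1)) ∧ a' = sgn2 (v (con p2))) := by
  unfold g at h
  split_ifs at h with h1 h2 h3 h4
  · exact Or.inl h1
  · exact Or.inr (Or.inl ⟨h2.1, h2.2, h⟩)
  · exact Or.inr (Or.inr (Or.inl h3))
  · exact Or.inr (Or.inr (Or.inr h4))
  · exact absurd rfl h

lemma sigOK_append_N {v : ℕ → Fin 3} {p : Hist} (sg : Fin 3 → Ev)
    (hp : ∀ i e, (dig p)[i]? = some e → e = sg (v i)) :
    ∀ i e, (dig (p ++ [Ev.N]))[i]? = some e → e = sg (v i) := by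
  intro i e he
  apply hp
  rwa [dig_append, show dig [Ev.N] = [] from rfl, List.append_nil] at he

lemma sigOK_append_consume {v : ℕ → Fin 3} {p : Hist} {a : Ev} (sg : Fin 3 → Ev)
    (hp : ∀ i e, (dig p)[i]? = some e → e = sg (v i))
    (ha : a = sg (v (con p))) (haN : a ≠ Ev.N) :
    ∀ i e, (dig (p ++ [a]))[i]? = some e → e = sg (v i) := by
  intro i e he
  rw [dig_append, show dig [a] = [a] by simp [dig, haN]] at he
  rcases lt_trichotomy i (con p) with h | h | h
  · apply hp
    rwa [List.getElem?_append_left h] at he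
  · subst h
    rw [show con p = (dig p).length from rfl] at he ha ⊢
    rw [List.getElem?_concat_length] at he
    cases he
    exact ha
  · exfalso
    have : ((dig p) ++ [a]).length ≤ i := by
      simp [List.length_append]
      show (dig p).length + 1 ≤ i
      exact h
    rw [List.getElem?_eq_none this] at he
    cases he

lemma superior_of_good {v : ℕ → Fin 3} {p1 p2 : Hist}
    (hlen : p1.length = p2.length) (hcon : con p1 = con p2)
    (h1 : ∀ i e, (dig p1)[i]? = some e → e = sgn1 (v i))
    (h2 : ∀ i e, (dig p2)[i]? = some e → e = sgn2 (v i)) :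
    Superior p2 p1 := by
  refine ⟨hlen.symm, hcon.symm, fun i ⟨hF, hS⟩ => ?_⟩
  have e1 := h1 i Ev.S hS
  have e2 := h2 i Ev.F hF
  have := sgn1_S_imp e1.symm
  rw [this] at e2
  cases e2

lemma con_take_append (p : Hist) (a : Ev) (k : ℕ) (hk : k ≤ p.length) :
    (p ++ [a]).take k = p.take k := by
  rw [List.take_append, show k - p.length = 0 by omega]
  simp

lemma good_step (σ : Hist → ℝ) (hmono : MonotoneStrat σ) (v : ℕ → Fin 3)
    {p1 p2 : Hist} {a a' : Ev} (hg : GoodP v p1 p2)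
    (h : g σ v p1 p2 a a' ≠ 0) : GoodP v (p1 ++ [a]) (p2 ++ [a']) := by
  obtain ⟨hlen, hcon, hs1, hs2⟩ := hg
  have hconfull : con p1 ≤ con p2 := by
    have := hcon p1.length
    rwa [List.take_length, hlen, List.take_length] at this
  have hconstep : con (p1 ++ [a]) ≤ con (p2 ++ [a']) ∧
      (∀ i e, (dig (p1 ++ [a]))[i]? = some e → e = sgn1 (v i)) ∧
      (∀ i e, (dig (p2 ++ [a']))[i]? = some e → e = sgn2 (v i)) := by
    rcases g_cases h with ⟨ha, ha'⟩ | ⟨ha, ha', hne⟩ | ⟨ha, ha'⟩ | ⟨ha, ha'⟩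
    · subst ha; subst ha'
      exact ⟨by rw [con_append_N, con_append_N]; exact hconfull,
        sigOK_append_N sgn1 hs1, sigOK_append_N sgn2 hs2⟩
    · have haN : a ≠ Ev.N := ha ▸ sgn1_ne_N _
      subst ha'
      have hlt : con p1 < con p2 := by
        rcases lt_or_eq_of_le hconfull with h' | h'
        · exact h'
        · exfalso
          apply hne
          have hsup := hmono p2 p1 (superior_of_good hlen h' hs1 hs2)
          rw [min_eq_left hsup, sub_self]
      constructor
      · rw [con_append_N, con_append_consume p1 a haN]
        omega
      · exact ⟨sigOK_append_consume sgn1 hs1 ha haN, sigOK_append_N sgn2 hs2⟩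
    · have haN' : a' ≠ Ev.N := ha' ▸ sgn2_ne_N _
      subst ha
      constructor
      · rw [con_append_N, con_append_consume p2 a' haN']
        omega
      · exact ⟨sigOK_append_N sgn1 hs1, sigOK_append_consume sgn2 hs2 ha' haN'⟩
    · have haN : a ≠ Ev.N := ha ▸ sgn1_ne_N _
      have haN' : a' ≠ Ev.N := ha' ▸ sgn2_ne_N _
      constructor
      · rw [con_append_consume p1 a haN, con_append_consume p2 a' haN']
        omega
      · exact ⟨sigOK_append_consume sgn1 hs1 ha haN,
          sigOK_append_consume sgn2 hs2 ha' haN'⟩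
  refine ⟨by simp [hlen], fun k => ?_, hconstep.2.1, hconstep.2.2⟩
  by_cases hk : k ≤ p1.length
  · rw [con_take_append p1 a k hk, con_take_append p2 a' k (by omega)]
    exact hcon k
  · have hk1 : p1.length + 1 ≤ k := by omega
    have e1 : (p1 ++ [a]).take k = p1 ++ [a] := by
      apply List.take_of_length_le
      simp
      omega
    have e2 : (p2 ++ [a']).take k = p2 ++ [a'] := by
      apply List.take_of_length_le
      simp
      omega
    rw [e1, e2]
    exact hconstep.1

lemma good_run (σ : Hist → ℝ) (hmono : MonotoneStrat σ) (v : ℕ → Fin 3) :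
    ∀ (r r' p1 p2 : Hist), GoodP v p1 p2 → cpl σ v p1 p2 r r' ≠ 0 →
      GoodP v (p1 ++ r) (p2 ++ r') := by
  intro r
  induction r with
  | nil =>
    intro r' p1 p2 hg hc
    cases r' with
    | nil => simpa using hg
    | cons a' rt' => exact absurd rfl hc
  | cons a rt ih =>
    intro r' p1 p2 hg hc
    cases r' with
    | nil => exact absurd rfl hc
    | cons a' rt' =>
      have hsplit : g σ v p1 p2 a a' ≠ 0 ∧ cpl σ v (p1 ++ [a]) (p2 ++ [a']) rt rt' ≠ 0 := by
        have : cpl σ v p1 p2 (a :: rt) (a' :: rt')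
            = g σ v p1 p2 a a' * cpl σ v (p1 ++ [a]) (p2 ++ [a']) rt rt' := rfl
        rw [this] at hc
        exact mul_ne_zero_iff.mp hc
      have hstep := good_step σ hmono v hg hsplit.1
      have := ih rt' (p1 ++ [a]) (p2 ++ [a']) hstep hsplit.2
      rw [show p1 ++ a :: rt = (p1 ++ [a]) ++ rt by simp, show p2 ++ a' :: rt' = (p2 ++ [a']) ++ rt' by simp]
      exact this

lemma w_nonneg {q q' : ℝ} (hq0 : 0 ≤ q) (hqq' : q < q') (hq'1 : q' ≤ 1) (c : Fin 3) :
    0 ≤ w q q' c := by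
  fin_cases c <;> simp [w] <;> linarith

lemma w_sum (q q' : ℝ) : ∑ c : Fin 3, w q q' c = 1 := by
  rw [Fin.sum_univ_three]
  simp [w]

lemma w_S1 (q q' : ℝ) :
    ∑ c : Fin 3, w q q' c * (if Ev.S = sgn1 c then (1:ℝ) else 0) = q := by
  rw [Fin.sum_univ_three]
  simp [w, sgn1]

lemma w_F1 (q q' : ℝ) :
    ∑ c : Fin 3, w q q' c * (if Ev.F = sgn1 c then (1:ℝ) else 0) = 1 - q := by
  rw [Fin.sum_univ_three]
  simp [w, sgn1]

lemma w_S2 (q q' : ℝ) :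
    ∑ c : Fin 3, w q q' c * (if Ev.S = sgn2 c then (1:ℝ) else 0) = q' := by
  rw [Fin.sum_univ_three]
  simp [w, sgn2]

lemma w_F2 (q q' : ℝ) :
    ∑ c : Fin 3, w q q' c * (if Ev.F = sgn2 c then (1:ℝ) else 0) = 1 - q' := by
  rw [Fin.sum_univ_three]
  simp [w, sgn2]

end CP

open CP

/-- for qualities `q < q'` and a monotone strategy `σ`, there is a
coupling of the `t`-deep history distributions at `q` and at `q'` supported on
pairs `(Z,Z')` with: for all `k ≤ t` there is `l ≤ k` with
`dig(Z'^l) ≽ dig(Z^k)`; in particular `con(Z'^k) ≥ con(Z^k)`. -/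
theorem coupling_exists (t : ℕ) (σ : Hist → ℝ)
    (hval : ValidStrat σ) (hmono : MonotoneStrat σ)
    (q q' : ℝ) (hq0 : 0 ≤ q) (hqq' : q < q') (hq'1 : q' ≤ 1) :
    ∃ f : (Fin t → Ev) → (Fin t → Ev) → ℝ,
      (∀ Z Z', 0 ≤ f Z Z') ∧
      (∀ Z, ∑ Z', f Z Z' = histProb σ q (List.ofFn Z)) ∧
      (∀ Z', ∑ Z, f Z Z' = histProb σ q' (List.ofFn Z')) ∧
      (∀ Z Z', f Z Z' ≠ 0 → ∀ k ≤ t,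
        (∃ l ≤ k, DigSuperior ((List.ofFn Z').take l) ((List.ofFn Z).take k)) ∧
        con ((List.ofFn Z).take k) ≤ con ((List.ofFn Z').take k)) := by
  classical
  refine ⟨fun Z Z' => ∑ v : Fin t → Fin 3, (∏ i, w q q' (v i)) *
      cpl σ (vext t v) [] [] (List.ofFn Z) (List.ofFn Z'), ?_, ?_, ?_, ?_⟩
  · -- nonnegativity
    intro Z Z'
    apply Finset.sum_nonneg
    intro v _
    exact mul_nonneg
      (Finset.prod_nonneg fun i _ => w_nonneg hq0 hqq' hq'1 (v i))
      (cpl_nonneg σ hval _ _ _ _ _)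
  · -- first marginal
    intro Z
    rw [Finset.sum_comm]
    have h1 : ∀ v : Fin t → Fin 3,
        ∑ Z' : Fin t → Ev, (∏ i, w q q' (v i)) *
            cpl σ (vext t v) [] [] (List.ofFn Z) (List.ofFn Z')
          = (∏ i, w q q' (v i)) * PP σ sgn1 (vext t v) [] (List.ofFn Z) := by
      intro v
      rw [← Finset.mul_sum,
        sum_cpl_right σ (vext t v) t (List.ofFn Z) List.length_ofFn [] []]
    rw [Finset.sum_congr rfl fun v _ => h1 v]
    have hle : con ([] : Hist) + con (List.ofFn Z) ≤ t := by
      have h2 := con_le_length (List.ofFn Z)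
      rw [List.length_ofFn] at h2
      have h3 : con ([] : Hist) = 0 := rfl
      omega
    rw [sum_mu_PP σ sgn1 q q' t (List.ofFn Z) [] hle]
    rw [prod_TT sgn1 q q' t (List.ofFn Z) [] hle q (1 - q)
      (w_sum q q') (w_S1 q q') (w_F1 q q')]
    rw [histProb, exAnte]
    ring
  · -- second marginal
    intro Z'
    rw [Finset.sum_comm]
    have h1 : ∀ v : Fin t → Fin 3,
        ∑ Z : Fin t → Ev, (∏ i, w q q' (v i)) *
            cpl σ (vext t v) [] [] (List.ofFn Z) (List.ofFn Z')
          = (∏ i, w q q' (v i)) * PP σ sgn2 (vext t v) [] (List.ofFn Z') := by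
      intro v
      rw [← Finset.mul_sum,
        sum_cpl_left σ (vext t v) t (List.ofFn Z') List.length_ofFn [] []]
    rw [Finset.sum_congr rfl fun v _ => h1 v]
    have hle : con ([] : Hist) + con (List.ofFn Z') ≤ t := by
      have h2 := con_le_length (List.ofFn Z')
      rw [List.length_ofFn] at h2
      have h3 : con ([] : Hist) = 0 := rfl
      omega
    rw [sum_mu_PP σ sgn2 q q' t (List.ofFn Z') [] hle]
    rw [prod_TT sgn2 q q' t (List.ofFn Z') [] hle q' (1 - q')
      (w_sum q q') (w_S2 q q') (w_F2 q q')]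
    rw [histProb, exAnte]
    ring
  · -- support condition
    intro Z Z' hne k _
    obtain ⟨v, -, hv⟩ := Finset.exists_ne_zero_of_sum_ne_zero hne
    have hcpl : cpl σ (vext t v) [] [] (List.ofFn Z) (List.ofFn Z') ≠ 0 :=
      (mul_ne_zero_iff.mp hv).2
    have goodnil : GoodP (vext t v) [] [] := by
      refine ⟨rfl, fun k => le_refl _, ?_, ?_⟩ <;>
        · intro i e he
          simp [dig] at he
    have hgood := good_run σ hmono (vext t v) (List.ofFn Z) (List.ofFn Z') [] [] goodnil hcpl
    rw [List.nil_append, List.nil_append] at hgood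
    obtain ⟨hlen, hcon, hs1, hs2⟩ := hgood
    have hc := hcon k
    refine ⟨?_, hc⟩
    obtain ⟨l, hlk, hle⟩ := exists_take_con (List.ofFn Z') (con ((List.ofFn Z).take k)) k hc
    refine ⟨l, hlk, hle, ?_⟩
    rintro i ⟨hF, hS⟩
    have hF' := prefix_getElem? (dig_take_prefix (List.ofFn Z') l) hF
    have hS' := prefix_getElem? (dig_take_prefix (List.ofFn Z) k) hS
    have e1 := hs1 i Ev.S hS'
    have e2 := hs2 i Ev.F hF'
    have e3 := sgn1_S_imp e1.symm
    rw [e3] at e2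
    exact Ev.noConfusion e2
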